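/- arXiv:1408.2208 — 2 statements merged into one kernel-verified Lean document; each statement's English description precedes it below -/
import Mathlib

section
/- Let Q be an m×ℓ matrix with orthonormal columns, A an m×n matrix, A_k the rank-k truncated SVD of A, and B_k the rank-k truncated SVD of QᵀA. Then ‖A − A_k‖_F ≤ ‖A − QB_k‖_F ≤ ‖A − QQᵀA_k‖_F. -/
open Matrix

noncomputable def frobNorm {m n : ℕ} (A : Matrix (Fin m) (Fin n) ℝ) : ℝ :=
  Real.sqrt (∑ i, ∑ j, (A i j) ^ 2)

noncomputable def specNorm {m n : ℕ} (A : Matrix (Fin m) (Fin n) ℝ) : ℝ :=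
  ‖(Matrix.toEuclideanLin A).toContinuousLinearMap‖

/-- The `j`-th largest singular value of `A` (0-indexed). -/
noncomputable def sv {m n : ℕ} (A : Matrix (Fin m) (Fin n) ℝ) (j : Fin n) : ℝ :=
  Real.sqrt
    (((Matrix.isHermitian_conjTranspose_mul_self A).eigenvalues ∘
        Tuple.sort (Matrix.isHermitian_conjTranspose_mul_self A).eigenvalues)
      j.rev)

/-!
Let `P` and `P'` be the orthogonal projections onto the leading `k` right singular vectors of
`A` and of `M = QᵀA`, so that `A_k = A P`, `B_k = M P'` and `QᵀA_k = M P`. Since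
`‖A - QZ‖² = ‖A‖² - ‖M‖² + ‖M - Z‖²` and `‖X - XP‖² = ‖X‖² - tr(XᵀX P)` for a projection `P`,
both inequalities reduce to Ky Fan's maximum principle: among orthogonal projections of trace at
most `k`, `tr(XᵀX P)` is largest for the projection onto the leading `k` right singular vectors
of `X`. Applied to `A` (together with `‖QᵀAP'‖ ≤ ‖AP'‖`) it gives the first inequality, applied to
`M` the second. The principle itself is a bathtub argument: `tr(V diag(μ) Vᵀ P) = ∑ μⱼ wⱼ` with
weights `wⱼ = (VᵀPV)ⱼⱼ ∈ [0, 1]` of total mass at most `k`.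
-/

lemma sum_mul_le_sum_lt_of_antitone {r k : ℕ} {μ t : Fin r → ℝ} (hμ : Antitone μ)
    (hμ0 : ∀ i, 0 ≤ μ i) (ht0 : ∀ i, 0 ≤ t i) (ht1 : ∀ i, t i ≤ 1) (hts : ∑ i, t i ≤ k) :
    ∑ i, μ i * t i ≤ ∑ i : Fin r, if (i : ℕ) < k then μ i else 0 := by
  -- `c` separates the leading values `μ i`, `i < k`, from the others.
  set c : ℝ := if h : k < r then μ ⟨k, h⟩ else 0
  have hc0 : 0 ≤ c := by
    simp only [c]; split_ifs
    exacts [hμ0 _, le_rfl]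
  have termwise : ∀ i, μ i * t i - (if (i : ℕ) < k then μ i else 0)
      ≤ c * (t i - if (i : ℕ) < k then 1 else 0) := by
    intro i
    split_ifs with hi
    · have hc : c ≤ μ i := by
        simp only [c]; split_ifs with h
        exacts [hμ (Fin.mk_le_of_le_val hi.le), hμ0 i]
      nlinarith [ht1 i]
    · have h : k < r := by omega
      have hc : μ i ≤ c := by
        simp only [c, dif_pos h]; exact hμ (Fin.le_def.mpr (by simp; omega))
      nlinarith [ht0 i]
  have hcount : c * (∑ i, t i - ∑ i : Fin r, if (i : ℕ) < k then (1 : ℝ) else 0) ≤ 0 := by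
    rw [Finset.sum_boole, Fin.card_filter_val_lt]
    by_cases h : k < r
    · rw [min_eq_right h.le]; exact mul_nonpos_of_nonneg_of_nonpos hc0 (by linarith)
    · simp [c, h]
  have hsum := Finset.sum_le_sum fun i (_ : i ∈ Finset.univ) => termwise i
  rw [Finset.sum_sub_distrib, ← Finset.mul_sum, Finset.sum_sub_distrib] at hsum
  linarith

lemma antitone_sq {ι : Type*} [Preorder ι] {σ : ι → ℝ} (hσ : Antitone σ) (hσ0 : ∀ j, 0 ≤ σ j) :
    Antitone fun j => σ j ^ 2 :=
  fun _ j hij => pow_le_pow_left₀ (hσ0 j) (hσ hij) 2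

lemma trace_diagonal_mul {ι R : Type*} [Fintype ι] [DecidableEq ι] [NonUnitalNonAssocSemiring R]
    (d : ι → R) (M : Matrix ι ι R) : trace (diagonal d * M) = ∑ i, d i * M i i := by
  simp [trace, diagonal_mul]

section Projection

variable {α β : Type*} [Fintype α] [Fintype β]

lemma isStarProjection_iff_transpose {P : Matrix α α ℝ} :
    IsStarProjection P ↔ P * P = P ∧ Pᵀ = P := by
  rw [isStarProjection_iff', star_eq_conjTranspose, conjTranspose_eq_transpose_of_trivial]

lemma IsStarProjection.transpose_eq {P : Matrix α α ℝ} (hP : IsStarProjection P) : Pᵀ = P :=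
  (isStarProjection_iff_transpose.mp hP).2

lemma IsStarProjection.conj [DecidableEq β] {P : Matrix β β ℝ} (hP : IsStarProjection P)
    {V : Matrix α β ℝ} (hV : Vᵀ * V = 1) : IsStarProjection (V * P * Vᵀ) := by
  refine isStarProjection_iff_transpose.mpr ⟨?_, ?_⟩
  · calc V * P * Vᵀ * (V * P * Vᵀ) = V * (P * (Vᵀ * V) * P) * Vᵀ := by
          simp only [Matrix.mul_assoc]
      _ = V * P * Vᵀ := by rw [hV, Matrix.mul_one, hP.isIdempotentElem.eq, Matrix.mul_assoc]
  · rw [transpose_mul, transpose_mul, transpose_transpose, hP.transpose_eq, Matrix.mul_assoc]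

lemma isStarProjection_mul_transpose [DecidableEq β] {V : Matrix α β ℝ} (hV : Vᵀ * V = 1) :
    IsStarProjection (V * Vᵀ) := by
  simpa only [Matrix.mul_one] using (IsStarProjection.one (R := Matrix β β ℝ)).conj hV

lemma IsStarProjection.posSemidef_transpose_mul_mul {γ : Type*} [Fintype γ] {P : Matrix α α ℝ}
    (hP : IsStarProjection P) (V : Matrix α γ ℝ) : (Vᵀ * P * V).PosSemidef := by
  have h : Vᵀ * P * V = (P * V)ᴴ * (P * V) := by
    rw [conjTranspose_eq_transpose_of_trivial, transpose_mul, hP.transpose_eq,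
      Matrix.mul_assoc Vᵀ P (P * V), ← Matrix.mul_assoc P P V, hP.isIdempotentElem.eq,
      Matrix.mul_assoc]
  rw [h]
  exact posSemidef_conjTranspose_mul_self _

lemma IsStarProjection.trace_transpose_mul_self_mul_nonneg {γ : Type*} [Fintype γ]
    {P : Matrix α α ℝ} (hP : IsStarProjection P) (N : Matrix γ α ℝ) :
    0 ≤ trace (Nᵀ * N * P) := by
  have h := (hP.posSemidef_transpose_mul_mul Nᵀ).trace_nonneg
  rwa [transpose_transpose, trace_mul_cycle] at h

lemma IsStarProjection.trace_mul_le [DecidableEq α] {P E : Matrix α α ℝ}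
    (hP : IsStarProjection P) (hE : IsStarProjection E) : trace (P * E) ≤ trace P := by
  have h := hE.one_sub.trace_transpose_mul_self_mul_nonneg P
  rw [hP.transpose_eq, hP.isIdempotentElem.eq, Matrix.mul_sub, Matrix.mul_one, trace_sub] at h
  linarith

lemma transpose_mul_self_svd {γ : Type*} [DecidableEq β] {U : Matrix α β ℝ}
    (hU : Uᵀ * U = 1) (σ : β → ℝ) (V : Matrix γ β ℝ) :
    (U * diagonal σ * Vᵀ)ᵀ * (U * diagonal σ * Vᵀ) = V * diagonal (fun j => σ j ^ 2) * Vᵀ := by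
  rw [transpose_mul, transpose_mul, transpose_transpose, diagonal_transpose]
  simp only [Matrix.mul_assoc]
  rw [← Matrix.mul_assoc Uᵀ U, hU, Matrix.one_mul, ← Matrix.mul_assoc (diagonal σ),
    diagonal_mul_diagonal]
  simp only [sq]

variable {r : ℕ}

def leadingProj (V : Matrix α (Fin r) ℝ) (k : ℕ) : Matrix α α ℝ :=
  V * diagonal (fun j : Fin r => if (j : ℕ) < k then (1 : ℝ) else 0) * Vᵀ

lemma svd_mul_leadingProj {γ : Type*} {V : Matrix α (Fin r) ℝ} (hV : Vᵀ * V = 1)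
    (U : Matrix γ (Fin r) ℝ) (σ : Fin r → ℝ) (k : ℕ) :
    U * diagonal σ * Vᵀ * leadingProj V k
      = U * diagonal (fun j : Fin r => if (j : ℕ) < k then σ j else 0) * Vᵀ := by
  simp only [leadingProj, Matrix.mul_assoc]
  rw [← Matrix.mul_assoc Vᵀ V, hV, Matrix.one_mul, ← Matrix.mul_assoc (diagonal σ),
    diagonal_mul_diagonal]
  simp only [mul_ite, mul_one, mul_zero]

lemma isStarProjection_leadingProj {V : Matrix α (Fin r) ℝ} (hV : Vᵀ * V = 1) (k : ℕ) :
    IsStarProjection (leadingProj V k) := by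
  rw [leadingProj]
  refine IsStarProjection.conj (isStarProjection_iff_transpose.mpr ⟨?_, diagonal_transpose _⟩) hV
  rw [diagonal_mul_diagonal]
  simp only [mul_ite, mul_one, mul_zero]
  congr 1
  funext j
  split_ifs <;> rfl

lemma trace_leadingProj_le {V : Matrix α (Fin r) ℝ} (hV : Vᵀ * V = 1) (k : ℕ) :
    trace (leadingProj V k) ≤ k := by
  rw [leadingProj, trace_mul_cycle, hV, Matrix.one_mul, trace_diagonal, Finset.sum_boole,
    Fin.card_filter_val_lt]
  exact_mod_cast min_le_right r k

lemma trace_svd_mul_leadingProj {V : Matrix α (Fin r) ℝ} (hV : Vᵀ * V = 1) (μ : Fin r → ℝ)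
    (k : ℕ) :
    trace (V * diagonal μ * Vᵀ * leadingProj V k)
      = ∑ j : Fin r, if (j : ℕ) < k then μ j else 0 := by
  rw [svd_mul_leadingProj hV, trace_mul_cycle, hV, Matrix.one_mul, trace_diagonal]

theorem trace_mul_le_trace_mul_leadingProj [DecidableEq α] {V : Matrix α (Fin r) ℝ}
    (hV : Vᵀ * V = 1) {μ : Fin r → ℝ} (hμ : Antitone μ) (hμ0 : ∀ j, 0 ≤ μ j)
    {P : Matrix α α ℝ} (hP : IsStarProjection P) {k : ℕ} (hPk : trace P ≤ k) :
    trace (V * diagonal μ * Vᵀ * P) ≤ trace (V * diagonal μ * Vᵀ * leadingProj V k) := by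
  have hweight : trace (V * diagonal μ * Vᵀ * P) = ∑ j, μ j * (Vᵀ * P * V) j j := by
    rw [show V * diagonal μ * Vᵀ * P = V * (diagonal μ * (Vᵀ * P)) by
        simp only [Matrix.mul_assoc],
      trace_mul_comm, Matrix.mul_assoc, trace_diagonal_mul]
  have hweight_le_one (j : Fin r) : (Vᵀ * P * V) j j ≤ 1 := by
    have h := (hP.one_sub.posSemidef_transpose_mul_mul V).diag_nonneg (i := j)
    rw [Matrix.mul_sub, Matrix.sub_mul, Matrix.mul_one, hV, Matrix.sub_apply, one_apply_eq] at h
    linarith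
  have hweight_sum : ∑ j, (Vᵀ * P * V) j j ≤ k := by
    calc ∑ j, (Vᵀ * P * V) j j = trace (P * (V * Vᵀ)) := by
          rw [← trace_mul_comm, ← trace_mul_cycle]; rfl
      _ ≤ trace P := hP.trace_mul_le (isStarProjection_mul_transpose hV)
      _ ≤ k := hPk
  rw [hweight, trace_svd_mul_leadingProj hV]
  exact sum_mul_le_sum_lt_of_antitone hμ hμ0
    (fun j => (hP.posSemidef_transpose_mul_mul V).diag_nonneg) hweight_le_one hweight_sum

end Projection

section Frobenius

variable {m n l : ℕ}

lemma frobNorm_nonneg (X : Matrix (Fin m) (Fin n) ℝ) : 0 ≤ frobNorm X :=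
  Real.sqrt_nonneg _

lemma frobNorm_sq (X : Matrix (Fin m) (Fin n) ℝ) : frobNorm X ^ 2 = trace (Xᵀ * X) := by
  rw [frobNorm, Real.sq_sqrt (by positivity)]
  simp only [trace, diag, mul_apply, transpose_apply, sq]
  exact Finset.sum_comm

lemma frobNorm_transpose_mul_sq_le {Q : Matrix (Fin m) (Fin l) ℝ} (hQ : Qᵀ * Q = 1)
    (N : Matrix (Fin m) (Fin n) ℝ) : frobNorm (Qᵀ * N) ^ 2 ≤ frobNorm N ^ 2 := by
  have h := (isStarProjection_mul_transpose hQ).one_sub.trace_transpose_mul_self_mul_nonneg Nᵀ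
  rw [transpose_transpose, Matrix.mul_sub, Matrix.mul_one, trace_sub] at h
  have hproj : trace ((Qᵀ * N)ᵀ * (Qᵀ * N)) = trace (N * Nᵀ * (Q * Qᵀ)) := by
    rw [transpose_mul, transpose_transpose, ← Matrix.mul_assoc, trace_mul_cycle]
    simp only [Matrix.mul_assoc]
  rw [frobNorm_sq, frobNorm_sq, hproj, trace_mul_comm Nᵀ]
  linarith

lemma frobNorm_mul_sq {P : Matrix (Fin n) (Fin n) ℝ} (hP : IsStarProjection P)
    (M : Matrix (Fin m) (Fin n) ℝ) : frobNorm (M * P) ^ 2 = trace (Mᵀ * M * P) := by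
  rw [frobNorm_sq, transpose_mul, hP.transpose_eq, Matrix.mul_assoc, trace_mul_comm]
  simp only [Matrix.mul_assoc, hP.isIdempotentElem.eq]

lemma frobNorm_sub_mul_sq {P : Matrix (Fin n) (Fin n) ℝ} (hP : IsStarProjection P)
    (M : Matrix (Fin m) (Fin n) ℝ) :
    frobNorm (M - M * P) ^ 2 = frobNorm M ^ 2 - trace (Mᵀ * M * P) := by
  have h : M - M * P = M * (1 - P) := by rw [Matrix.mul_sub, Matrix.mul_one]
  rw [h, frobNorm_mul_sq hP.one_sub, Matrix.mul_sub, Matrix.mul_one, trace_sub, frobNorm_sq]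

lemma frobNorm_sub_mul_sq_eq {Q : Matrix (Fin m) (Fin l) ℝ} (hQ : Qᵀ * Q = 1)
    (A : Matrix (Fin m) (Fin n) ℝ) (Z : Matrix (Fin l) (Fin n) ℝ) :
    frobNorm (A - Q * Z) ^ 2
      = frobNorm A ^ 2 - frobNorm (Qᵀ * A) ^ 2 + frobNorm (Qᵀ * A - Z) ^ 2 := by
  simp only [frobNorm_sq, transpose_sub, transpose_mul, transpose_transpose, Matrix.sub_mul,
    Matrix.mul_sub, trace_sub, Matrix.mul_assoc]
  rw [← Matrix.mul_assoc Qᵀ Q Z, hQ, Matrix.one_mul]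
  ring

end Frobenius

theorem stmt7_general {m n l k : ℕ}
    (A Ak U : Matrix (Fin m) (Fin n) ℝ) (V : Matrix (Fin n) (Fin n) ℝ)
    (σ : Fin n → ℝ) (hU : Uᵀ * U = 1) (hV : Vᵀ * V = 1)
    (hσanti : Antitone σ) (hσ0 : ∀ j, 0 ≤ σ j)
    (hA : A = U * Matrix.diagonal σ * Vᵀ)
    (hAk : Ak = U * Matrix.diagonal (fun j : Fin n => if (j : ℕ) < k then σ j else 0) * Vᵀ)
    (Q : Matrix (Fin m) (Fin l) ℝ) (hQ : Qᵀ * Q = 1)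
    (W : Matrix (Fin l) (Fin (min l n)) ℝ) (V' : Matrix (Fin n) (Fin (min l n)) ℝ)
    (σ' : Fin (min l n) → ℝ) (hW : Wᵀ * W = 1) (hV' : V'ᵀ * V' = 1)
    (hσ'anti : Antitone σ') (hσ'0 : ∀ j, 0 ≤ σ' j)
    (hQA : Qᵀ * A = W * Matrix.diagonal σ' * V'ᵀ)
    (Bk : Matrix (Fin l) (Fin n) ℝ)
    (hBk : Bk = W * Matrix.diagonal (fun j : Fin (min l n) => if (j : ℕ) < k then σ' j else 0) * V'ᵀ) :
    frobNorm (A - Ak) ≤ frobNorm (A - Q * Bk) ∧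
    frobNorm (A - Q * Bk) ≤ frobNorm (A - Q * (Qᵀ * Ak)) := by
  set P := leadingProj V k
  set P' := leadingProj V' k
  have hP := isStarProjection_leadingProj hV k
  have hP' := isStarProjection_leadingProj hV' k
  have hAk' : Ak = A * P := by rw [hAk, hA, svd_mul_leadingProj hV]
  have hBk' : Bk = Qᵀ * A * P' := by rw [hBk, hQA, svd_mul_leadingProj hV']
  have hQAk : Qᵀ * Ak = Qᵀ * A * P := by rw [hAk', Matrix.mul_assoc]
  have kyFanA : trace (Aᵀ * A * P') ≤ trace (Aᵀ * A * P) := by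
    rw [hA, transpose_mul_self_svd hU]
    exact trace_mul_le_trace_mul_leadingProj hV (antitone_sq hσanti hσ0) (fun _ => sq_nonneg _)
      hP' (trace_leadingProj_le hV' k)
  have kyFanM : trace ((Qᵀ * A)ᵀ * (Qᵀ * A) * P) ≤ trace ((Qᵀ * A)ᵀ * (Qᵀ * A) * P') := by
    rw [hQA, transpose_mul_self_svd hW]
    exact trace_mul_le_trace_mul_leadingProj hV' (antitone_sq hσ'anti hσ'0)
      (fun _ => sq_nonneg _) hP (trace_leadingProj_le hV k)
  have hcompress : trace ((Qᵀ * A)ᵀ * (Qᵀ * A) * P') ≤ trace (Aᵀ * A * P') := by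
    rw [← frobNorm_mul_sq hP', ← frobNorm_mul_sq hP', Matrix.mul_assoc]
    exact frobNorm_transpose_mul_sq_le hQ _
  simp only [← pow_le_pow_iff_left₀ (frobNorm_nonneg _) (frobNorm_nonneg _) two_ne_zero]
  rw [frobNorm_sub_mul_sq_eq hQ, frobNorm_sub_mul_sq_eq hQ, hQAk, hAk', hBk',
    frobNorm_sub_mul_sq hP, frobNorm_sub_mul_sq hP', frobNorm_sub_mul_sq hP]
  constructor <;> linarith

theorem stmt7 {m n l k : ℕ} (hmn : n ≤ m) (hk : 1 ≤ k) (hkl : k ≤ l) (hkn : k < n)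
    (A Ak U : Matrix (Fin m) (Fin n) ℝ) (V : Matrix (Fin n) (Fin n) ℝ)
    (σ : Fin n → ℝ) (hU : Uᵀ * U = 1) (hV : Vᵀ * V = 1)
    (hσanti : Antitone σ) (hσ0 : ∀ j, 0 ≤ σ j)
    (hA : A = U * Matrix.diagonal σ * Vᵀ)
    (hAk : Ak = U * Matrix.diagonal (fun j : Fin n => if (j : ℕ) < k then σ j else 0) * Vᵀ)
    (Q : Matrix (Fin m) (Fin l) ℝ) (hQ : Qᵀ * Q = 1)
    (W : Matrix (Fin l) (Fin (min l n)) ℝ) (V' : Matrix (Fin n) (Fin (min l n)) ℝ)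
    (σ' : Fin (min l n) → ℝ) (hW : Wᵀ * W = 1) (hV' : V'ᵀ * V' = 1)
    (hσ'anti : Antitone σ') (hσ'0 : ∀ j, 0 ≤ σ' j)
    (hQA : Qᵀ * A = W * Matrix.diagonal σ' * V'ᵀ)
    (Bk : Matrix (Fin l) (Fin n) ℝ)
    (hBk : Bk = W * Matrix.diagonal (fun j : Fin (min l n) => if (j : ℕ) < k then σ' j else 0) * V'ᵀ) :
    frobNorm (A - Ak) ≤ frobNorm (A - Q * Bk) ∧
    frobNorm (A - Q * Bk) ≤ frobNorm (A - Q * (Qᵀ * Ak)) :=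
  stmt7_general A Ak U V σ hU hV hσanti hσ0 hA hAk Q hQ W V' σ' hW hV' hσ'anti hσ'0 hQA Bk hBk
end

section
/- (Hoffman–Wielandt for singular values) Let X and Y be m×n real matrices with m ≥ n. Then sqrt(Σ_{j=1}^n |σ_j(X) − σ_j(Y)|²) ≤ ‖X − Y‖_F. -/
open Matrix

/-!
Let `V`, `W` be orthogonal matrices diagonalising `XᵀX` and `YᵀY`, with columns ordered by
decreasing eigenvalue. Then `A = XV` and `B = YW` have orthogonal columns of lengths `σⱼ(X)` and
`σₖ(Y)`, and `tr(XᵀY) = ∑ⱼₖ (AᵀB)ⱼₖ Nₖⱼ` with `N = WᵀV` orthogonal. Cauchy–Schwarz and AM–GM bound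
each term by `σⱼ(X) σₖ(Y) Eⱼₖ`, where `2Eⱼₖ = Cⱼₖ² + Nₖⱼ²` and `Cⱼₖ = (AᵀB)ⱼₖ / (σⱼ(X) σₖ(Y))`.
Bessel's inequality makes `E` doubly substochastic, and for such `E` and decreasing nonnegative
`s`, `t`, two Abel summations give `∑ⱼₖ sⱼ tₖ Eⱼₖ ≤ ∑ⱼ sⱼ tⱼ`. This is von Neumann's trace
inequality `tr(XᵀY) ≤ ∑ⱼ σⱼ(X) σⱼ(Y)`, and the theorem follows by expanding
`‖X - Y‖_F² = ‖X‖_F² + ‖Y‖_F² - 2 tr(XᵀY)` with `‖X‖_F² = ∑ⱼ σⱼ(X)²`.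
-/

open Finset

section Rearrangement

variable {R : Type*} [CommRing R] [LinearOrder R] [IsStrictOrderedRing R]

theorem sum_mul_nonneg_of_sum_Iic_nonneg : ∀ {n : ℕ} {s d : Fin n → R}, Antitone s →
    (∀ j, 0 ≤ s j) → (∀ r, 0 ≤ ∑ j ∈ Iic r, d j) → 0 ≤ ∑ j, s j * d j
  | 0, _, _, _, _, _ => by simp
  | n + 1, s, d, hs, hs0, hd => by
    have htail : 0 ≤ ∑ j : Fin n, (s j.castSucc - s (Fin.last n)) * d j.castSucc := by
      refine sum_mul_nonneg_of_sum_Iic_nonneg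
        (fun i j hij => sub_le_sub_right (hs (Fin.castSucc_le_castSucc_iff.mpr hij)) _)
        (fun j => sub_nonneg.mpr (hs (Fin.le_last _))) (fun r => ?_)
      simpa [← Fin.map_castSuccEmb_Iic] using hd r.castSucc
    have htotal : 0 ≤ ∑ j, d j := by simpa only [Iic_top] using hd ⊤
    calc (0 : R) ≤ ∑ j : Fin n, (s j.castSucc - s (Fin.last n)) * d j.castSucc
          + s (Fin.last n) * ∑ j, d j := add_nonneg htail (mul_nonneg (hs0 _) htotal)
      _ = ∑ j, s j * d j := by
        rw [Fin.sum_univ_castSucc (fun j => s j * d j), Fin.sum_univ_castSucc d, mul_add,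
          mul_sum, ← add_assoc, ← sum_add_distrib]
        congr 1
        exact sum_congr rfl fun j _ => by ring

theorem sum_mul_le_sum_mul_of_sum_Iic_le {n : ℕ} {s w v : Fin n → R} (hs : Antitone s)
    (hs0 : ∀ j, 0 ≤ s j) (h : ∀ r, ∑ j ∈ Iic r, w j ≤ ∑ j ∈ Iic r, v j) :
    ∑ j, s j * w j ≤ ∑ j, s j * v j := by
  have := sum_mul_nonneg_of_sum_Iic_nonneg (d := v - w) hs hs0
    (fun r => by simpa [sum_sub_distrib] using h r)
  simpa [mul_sub, sum_sub_distrib] using this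

theorem sum_mul_le_sum_Iic_of_le_one {n : ℕ} {t c : Fin n → R} (ht : Antitone t)
    (ht0 : ∀ k, 0 ≤ t k) (hc0 : ∀ k, 0 ≤ c k) (hc1 : ∀ k, c k ≤ 1) {r : Fin n}
    (hsum : ∑ k, c k ≤ #(Iic r)) :
    ∑ k, t k * c k ≤ ∑ k ∈ Iic r, t k := by
  have hind : ∑ k ∈ Iic r, t k = ∑ k, t k * if k ≤ r then 1 else 0 := by
    simp only [mul_ite, mul_one, mul_zero, ← sum_filter, filter_ge_eq_Iic]
  rw [hind]
  refine sum_mul_le_sum_mul_of_sum_Iic_le ht ht0 fun p => ?_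
  rcases le_total p r with hpr | hrp
  · calc ∑ k ∈ Iic p, c k ≤ ∑ k ∈ Iic p, 1 := sum_le_sum fun k _ => hc1 k
      _ = ∑ k ∈ Iic p, if k ≤ r then 1 else 0 :=
        sum_congr rfl fun k hk => (if_pos ((mem_Iic.mp hk).trans hpr)).symm
  · calc ∑ k ∈ Iic p, c k ≤ ∑ k, c k := sum_le_univ_sum_of_nonneg hc0
      _ ≤ #(Iic r) := hsum
      _ = ∑ k ∈ Iic p, if k ≤ r then 1 else 0 := by
        rw [← sum_filter, sum_const, nsmul_one]
        congr 2
        ext k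
        simpa using fun hkr => hkr.trans hrp

theorem sum_sum_mul_mul_le_of_substochastic {n : ℕ} {s t : Fin n → R} (hs : Antitone s)
    (ht : Antitone t) (hs0 : ∀ j, 0 ≤ s j) (ht0 : ∀ k, 0 ≤ t k) {E : Fin n → Fin n → R}
    (hE0 : ∀ j k, 0 ≤ E j k) (hrow : ∀ j, ∑ k, E j k ≤ 1) (hcol : ∀ k, ∑ j, E j k ≤ 1) :
    ∑ j, ∑ k, s j * t k * E j k ≤ ∑ j, s j * t j := by
  have hrw : ∑ j, ∑ k, s j * t k * E j k = ∑ j, s j * ∑ k, t k * E j k := by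
    simp only [mul_sum, mul_assoc]
  rw [hrw]
  refine sum_mul_le_sum_mul_of_sum_Iic_le hs hs0 fun r => ?_
  calc ∑ j ∈ Iic r, ∑ k, t k * E j k = ∑ k, t k * ∑ j ∈ Iic r, E j k := by
        rw [sum_comm]; simp only [mul_sum]
    _ ≤ ∑ k ∈ Iic r, t k := by
      refine sum_mul_le_sum_Iic_of_le_one ht ht0 (fun k => sum_nonneg fun j _ => hE0 j k)
        (fun k => (sum_le_univ_sum_of_nonneg fun j => hE0 j k).trans (hcol k)) ?_
      calc ∑ k, ∑ j ∈ Iic r, E j k = ∑ j ∈ Iic r, ∑ k, E j k := sum_comm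
        _ ≤ ∑ j ∈ Iic r, 1 := sum_le_sum fun j _ => hrow j
        _ = #(Iic r) := by simp

end Rearrangement

theorem mul_le_mul_sq_div_add_sq_div_two {x y c : ℝ} (hc : 0 ≤ c) (hx : x ^ 2 ≤ c ^ 2) :
    x * y ≤ c * (((x / c) ^ 2 + y ^ 2) / 2) := by
  rcases hc.eq_or_lt with rfl | hc
  · obtain rfl : x = 0 := by simpa using hx
    simp
  · have hxc : x = c * (x / c) := by field_simp
    rw [hxc, mul_div_cancel_left₀ _ hc.ne']
    nlinarith [mul_nonneg hc.le (sq_nonneg (x / c - y))]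

section GramMatrices

variable {m ι κ : Type*} [Fintype m]

theorem sq_transpose_mul_apply_le (A : Matrix m ι ℝ) (B : Matrix m κ ℝ) (j : ι) (k : κ) :
    (Aᵀ * B) j k ^ 2 ≤ (Aᵀ * A) j j * (Bᵀ * B) k k := by
  simpa only [mul_apply, transpose_apply, sq] using
    sum_mul_sq_le_sq_mul_sq univ (fun i => A i j) (fun i => B i k)

theorem sum_sq_vecMul_div_le_dotProduct_self [Fintype ι] [DecidableEq ι] {B : Matrix m ι ℝ}
    {d : ι → ℝ} (hB : Bᵀ * B = diagonal d) (u : m → ℝ) :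
    ∑ k, (u ᵥ* B) k ^ 2 / d k ≤ u ⬝ᵥ u := by
  -- `B *ᵥ c` is the orthogonal projection of `u` onto the span of the columns of `B`.
  set a := u ᵥ* B
  set c : ι → ℝ := fun k => a k / d k
  have hcross : u ⬝ᵥ B *ᵥ c = ∑ k, a k ^ 2 / d k := by
    rw [dotProduct_mulVec]
    exact sum_congr rfl fun k _ => by simp only [c]; ring
  have hproj : B *ᵥ c ⬝ᵥ B *ᵥ c = ∑ k, a k ^ 2 / d k := by
    rw [dotProduct_mulVec, ← mulVec_transpose, mulVec_mulVec, hB]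
    refine sum_congr rfl fun k _ => ?_
    rw [mulVec_diagonal]
    rcases eq_or_ne (d k) 0 with hd | hd
    · simp [c, hd]
    · simp only [c]
      field_simp
  have hnonneg : 0 ≤ (u - B *ᵥ c) ⬝ᵥ (u - B *ᵥ c) :=
    Fintype.sum_nonneg fun _ => mul_self_nonneg _
  rw [sub_dotProduct, dotProduct_sub, dotProduct_sub, dotProduct_comm (B *ᵥ c) u, hcross,
    hproj] at hnonneg
  linarith

theorem sum_sq_transpose_mul_div_le_one [Fintype κ] [DecidableEq ι] [DecidableEq κ]
    {A : Matrix m ι ℝ} {B : Matrix m κ ℝ} {s : ι → ℝ} {t : κ → ℝ}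
    (hA : Aᵀ * A = diagonal fun j => s j ^ 2)
    (hB : Bᵀ * B = diagonal fun k => t k ^ 2) (j : ι) :
    ∑ k, ((Aᵀ * B) j k / (s j * t k)) ^ 2 ≤ 1 := by
  have hAjj : Aᵀ j ⬝ᵥ Aᵀ j = s j ^ 2 :=
    (congr_fun (congr_fun hA j) j).trans (diagonal_apply_eq _ _)
  calc ∑ k, ((Aᵀ * B) j k / (s j * t k)) ^ 2
      = (∑ k, (Aᵀ j ᵥ* B) k ^ 2 / t k ^ 2) / s j ^ 2 := by
        rw [sum_div]
        exact sum_congr rfl fun k _ => by rw [div_pow, mul_pow, div_div, mul_comm]; rfl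
    _ ≤ (Aᵀ j ⬝ᵥ Aᵀ j) / s j ^ 2 :=
        div_le_div_of_nonneg_right (sum_sq_vecMul_div_le_dotProduct_self hB _) (sq_nonneg _)
    _ = s j ^ 2 / s j ^ 2 := by rw [hAjj]
    _ ≤ 1 := div_self_le_one _

end GramMatrices

section OrthogonalGroup

variable {n R : Type*} [Fintype n] [DecidableEq n] [CommRing R]

theorem sum_sq_row_eq_one_of_mem_orthogonalGroup {N : Matrix n n R}
    (hN : N ∈ orthogonalGroup n R) (k : n) :
    ∑ j, N k j ^ 2 = 1 := by
  simpa [mul_apply, sq] using congr_fun (congr_fun ((mem_orthogonalGroup_iff n R).mp hN) k) k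

theorem sum_sq_col_eq_one_of_mem_orthogonalGroup {N : Matrix n n R}
    (hN : N ∈ orthogonalGroup n R) (j : n) :
    ∑ k, N k j ^ 2 = 1 := by
  simpa [mul_apply, sq] using congr_fun (congr_fun ((mem_orthogonalGroup_iff' n R).mp hN) j) j

theorem trace_transpose_mul_mul_of_mem_orthogonalGroup {V : Matrix n n R}
    (hV : V ∈ orthogonalGroup n R) (M : Matrix n n R) : trace (Vᵀ * M * V) = trace M := by
  rw [trace_mul_cycle, (mem_orthogonalGroup_iff n R).mp hV, Matrix.one_mul]

theorem submatrix_id_mem_orthogonalGroup {V : Matrix n n R} (hV : V ∈ orthogonalGroup n R)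
    (π : Equiv.Perm n) : V.submatrix id π ∈ orthogonalGroup n R := by
  rw [mem_orthogonalGroup_iff, transpose_submatrix, submatrix_mul_equiv,
    (mem_orthogonalGroup_iff n R).mp hV, submatrix_id_id]

end OrthogonalGroup

section SingularValues

variable {m n : ℕ}

theorem sv_nonneg (X : Matrix (Fin m) (Fin n) ℝ) (j : Fin n) : 0 ≤ sv X j :=
  Real.sqrt_nonneg _

theorem sv_antitone (X : Matrix (Fin m) (Fin n) ℝ) : Antitone (sv X) :=
  fun _ _ hij => Real.sqrt_le_sqrt (Tuple.monotone_sort _ (Fin.rev_le_rev.mpr hij))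

theorem exists_mem_orthogonalGroup_gram_eq_diagonal_sv (X : Matrix (Fin m) (Fin n) ℝ) :
    ∃ V ∈ orthogonalGroup (Fin n) ℝ, (X * V)ᵀ * (X * V) = diagonal fun j => sv X j ^ 2 := by
  set hH := isHermitian_conjTranspose_mul_self X
  set U : Matrix (Fin n) (Fin n) ℝ := ↑hH.eigenvectorUnitary
  -- `π j` indexes the `j`-th largest eigenvalue, as in the definition of `sv`.
  set π : Equiv.Perm (Fin n) := Fin.revPerm.trans (Tuple.sort hH.eigenvalues)
  have hU : Uᵀ * (Xᵀ * X) * U = diagonal hH.eigenvalues := by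
    have h := hH.conjStarAlgAut_star_eigenvectorUnitary
    rw [Unitary.conjStarAlgAut_star_apply] at h
    exact h
  have hXU : X * U.submatrix id π = (X * U).submatrix id π := by
    ext i j
    simp [mul_apply]
  refine ⟨U.submatrix id π, submatrix_id_mem_orthogonalGroup hH.eigenvectorUnitary.2 π, ?_⟩
  rw [hXU, transpose_submatrix, ← submatrix_mul _ _ π id π Function.bijective_id, transpose_mul,
    ← Matrix.mul_assoc, Matrix.mul_assoc Uᵀ, hU, submatrix_diagonal_equiv]
  congr 1
  funext j
  exact (Real.sq_sqrt (eigenvalues_conjTranspose_mul_self_nonneg X _)).symm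

theorem sum_sv_sq (X : Matrix (Fin m) (Fin n) ℝ) : ∑ j, sv X j ^ 2 = trace (Xᵀ * X) := by
  obtain ⟨V, hV, hXV⟩ := exists_mem_orthogonalGroup_gram_eq_diagonal_sv X
  calc ∑ j, sv X j ^ 2 = trace ((X * V)ᵀ * (X * V)) := by rw [hXV, trace_diagonal]
    _ = trace (Vᵀ * (Xᵀ * X) * V) := by simp only [transpose_mul, Matrix.mul_assoc]
    _ = trace (Xᵀ * X) := trace_transpose_mul_mul_of_mem_orthogonalGroup hV _

theorem trace_transpose_mul_le_sum_sv_mul_sv (X Y : Matrix (Fin m) (Fin n) ℝ) :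
    trace (Xᵀ * Y) ≤ ∑ j, sv X j * sv Y j := by
  obtain ⟨V, hV, hA⟩ := exists_mem_orthogonalGroup_gram_eq_diagonal_sv X
  obtain ⟨W, hW, hB⟩ := exists_mem_orthogonalGroup_gram_eq_diagonal_sv Y
  set A := X * V
  set B := Y * W
  set N := Wᵀ * V
  have hN : N ∈ orthogonalGroup (Fin n) ℝ := mul_mem (Unitary.star_mem hW) hV
  have htrace : trace (Xᵀ * Y) = ∑ j, ∑ k, (Aᵀ * B) j k * N k j := by
    calc trace (Xᵀ * Y) = trace (Vᵀ * (Xᵀ * Y) * V) :=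
          (trace_transpose_mul_mul_of_mem_orthogonalGroup hV _).symm
      _ = trace (Aᵀ * B * N) := by
          simp only [A, B, N, transpose_mul, Matrix.mul_assoc]
          rw [← Matrix.mul_assoc W, (mem_orthogonalGroup_iff _ ℝ).mp hW, Matrix.one_mul]
      _ = ∑ j, ∑ k, (Aᵀ * B) j k * N k j := by simp only [trace, diag_apply, mul_apply]
  set C : Fin n → Fin n → ℝ := fun j k => (Aᵀ * B) j k / (sv X j * sv Y k)
  have hterm (j k : Fin n) :
      (Aᵀ * B) j k * N k j ≤ sv X j * sv Y k * ((C j k ^ 2 + N k j ^ 2) / 2) := by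
    refine mul_le_mul_sq_div_add_sq_div_two (mul_nonneg (sv_nonneg X j) (sv_nonneg Y k)) ?_
    calc (Aᵀ * B) j k ^ 2 ≤ (Aᵀ * A) j j * (Bᵀ * B) k k := sq_transpose_mul_apply_le A B j k
      _ = (sv X j * sv Y k) ^ 2 := by rw [hA, hB, diagonal_apply_eq, diagonal_apply_eq, mul_pow]
  have hrow (j : Fin n) : ∑ k, (C j k ^ 2 + N k j ^ 2) / 2 ≤ 1 := by
    rw [← sum_div, sum_add_distrib, sum_sq_col_eq_one_of_mem_orthogonalGroup hN j]
    linarith [sum_sq_transpose_mul_div_le_one hA hB j]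
  have hcol (k : Fin n) : ∑ j, (C j k ^ 2 + N k j ^ 2) / 2 ≤ 1 := by
    have hC (j : Fin n) : C j k = (Bᵀ * A) k j / (sv Y k * sv X j) := by
      rw [mul_comm (sv Y k), ← transpose_apply (Bᵀ * A), transpose_mul, transpose_transpose]
    simp only [hC]
    rw [← sum_div, sum_add_distrib, sum_sq_row_eq_one_of_mem_orthogonalGroup hN k]
    linarith [sum_sq_transpose_mul_div_le_one hB hA k]
  calc trace (Xᵀ * Y) = ∑ j, ∑ k, (Aᵀ * B) j k * N k j := htrace
    _ ≤ ∑ j, ∑ k, sv X j * sv Y k * ((C j k ^ 2 + N k j ^ 2) / 2) :=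
        sum_le_sum fun j _ => sum_le_sum fun k _ => hterm j k
    _ ≤ ∑ j, sv X j * sv Y j :=
        sum_sum_mul_mul_le_of_substochastic (sv_antitone X) (sv_antitone Y) (sv_nonneg X)
          (sv_nonneg Y) (fun j k => by positivity) hrow hcol

end SingularValues

theorem trace_transpose_mul_self_eq_sum_sq {m n R : Type*} [Fintype m] [Fintype n] [Semiring R]
    (A : Matrix m n R) :
    trace (Aᵀ * A) = ∑ i, ∑ j, A i j ^ 2 := by
  simp only [trace, diag_apply, mul_apply, transpose_apply, sq]
  exact sum_comm

theorem stmt10_general {m n : ℕ} (X Y : Matrix (Fin m) (Fin n) ℝ) :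
    Real.sqrt (∑ j : Fin n, (sv X j - sv Y j) ^ 2) ≤ frobNorm (X - Y) := by
  rw [frobNorm, ← trace_transpose_mul_self_eq_sum_sq]
  refine Real.sqrt_le_sqrt ?_
  have hYX : trace (Yᵀ * X) = trace (Xᵀ * Y) := by
    rw [← trace_transpose, transpose_mul, transpose_transpose]
  calc ∑ j, (sv X j - sv Y j) ^ 2
      = ∑ j, sv X j ^ 2 + ∑ j, sv Y j ^ 2 - 2 * ∑ j, sv X j * sv Y j := by
        simp only [sub_sq, sum_add_distrib, sum_sub_distrib, mul_sum, mul_assoc]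
        ring
    _ ≤ trace (Xᵀ * X) + trace (Yᵀ * Y) - 2 * trace (Xᵀ * Y) := by
        rw [sum_sv_sq, sum_sv_sq]
        linarith [trace_transpose_mul_le_sum_sv_mul_sv X Y]
    _ = trace ((X - Y)ᵀ * (X - Y)) := by
        rw [transpose_sub, Matrix.sub_mul, Matrix.mul_sub, Matrix.mul_sub, trace_sub, trace_sub,
          trace_sub, hYX]
        ring

theorem stmt10 {m n : ℕ} (hmn : n ≤ m) (X Y : Matrix (Fin m) (Fin n) ℝ) :
    Real.sqrt (∑ j : Fin n, (sv X j - sv Y j) ^ 2) ≤ frobNorm (X - Y) :=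
  stmt10_general X Y
end
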